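/- Let d_A, d_D ≥ 1 and let ρ be a density matrix on ℂ^{d_A} ⊗ ℂ^{d_D} (entries indexed by pairs (a,d) ∈ [d_A]×[d_D]). Let ρ_D be the partial trace of ρ over the first factor, and let ρ_D^{−1} denote the generalized (Moore–Penrose) inverse of ρ_D. Then tr(ρ²·(I_{d_A} ⊗ ρ_D^{−1})) ≤ d_A. -/

import Mathlib

open scoped ComplexOrder Matrix Kronecker

/-- The generalized (Moore–Penrose) inverse of a Hermitian matrix, defined via its spectral
decomposition: `σ⁻¹ = ∑_{k : μ_k ≠ 0} μ_k⁻¹ |w_k⟩⟨w_k|`. (Junk value `0` if the matrix fails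
to be Hermitian; for Hermitian matrices this agrees with the Moore–Penrose inverse.) -/
noncomputable def pinvH {N : Type*} [Fintype N] [DecidableEq N] (σ : Matrix N N ℂ) :
    Matrix N N ℂ :=
  if h : σ.IsHermitian then
    ∑ k ∈ Finset.univ.filter (fun k => h.eigenvalues k ≠ 0),
      ((h.eigenvalues k)⁻¹ : ℝ) •
        Matrix.of (fun i j => (h.eigenvectorBasis k) i * star ((h.eigenvectorBasis k) j))
  else 0

/-- The partial trace over the first tensor factor of a matrix on `ℂ^{d_A} ⊗ ℂ^{d_D}`. -/
noncomputable def ptrFst {dA dD : ℕ} (ρ : Matrix (Fin dA × Fin dD) (Fin dA × Fin dD) ℂ) :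
    Matrix (Fin dD) (Fin dD) ℂ :=
  Matrix.of fun d₁ d₂ => ∑ a : Fin dA, ρ (a, d₁) (a, d₂)

/-! With `S = 1 ⊗ (ρ_D⁺)^{1/2}` one has `S * S = 1 ⊗ ρ_D⁺` and `S * (1 ⊗ ρ_D) * S ≤ 1`. An operator
Cauchy–Schwarz inequality over the `d_A` diagonal blocks gives `ρ ≤ d_A • (1 ⊗ ρ_D)`, hence
`X * Xᴴ = S * ρ * S ≤ d_A` for `X = S * ρ^{1/2}`. As `X * Xᴴ` and `Xᴴ * X` have the same nonzero
spectrum, also `Xᴴ * X ≤ d_A`, and so `tr (ρ² (1 ⊗ ρ_D⁺)) = tr (ρ^{1/2} (Xᴴ * X) ρ^{1/2}) ≤ d_A`. -/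

open scoped MatrixOrder

section StarOrderedRing

variable {A : Type*} [Ring A] [StarRing A] [PartialOrder A] [StarOrderedRing A]

theorem star_sum_mul_sum_le_card_nsmul {ι : Type*} (s : Finset ι) (x : ι → A) :
    star (∑ i ∈ s, x i) * ∑ i ∈ s, x i ≤ s.card • ∑ i ∈ s, star (x i) * x i := by
  classical
  induction s using Finset.induction_on with
  | empty => simp
  | insert j s hj ih =>
    set S := ∑ i ∈ s, x i
    set Q := ∑ i ∈ s, star (x i) * x i
    have hcross : star (x j) * S + star S * x j ≤ Q + s.card • (star (x j) * x j) := by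
      have hdev : 0 ≤ ∑ i ∈ s, star (x i - x j) * (x i - x j) :=
        Finset.sum_nonneg fun i _ => star_mul_self_nonneg _
      simp only [star_sub, sub_mul, mul_sub, Finset.sum_sub_distrib, ← Finset.sum_mul,
        ← Finset.mul_sum, ← star_sum, Finset.sum_const, star_nsmul, smul_mul_assoc] at hdev
      rw [← sub_nonneg]
      convert hdev using 1
      abel
    rw [Finset.sum_insert hj, Finset.sum_insert hj, Finset.card_insert_of_notMem hj, star_add,
      add_mul, mul_add, mul_add, succ_nsmul, nsmul_add]
    convert add_le_add_right (add_le_add ih hcross) (star (x j) * x j) using 1 <;> abel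

variable [TopologicalSpace A] [Algebra ℝ A] [ContinuousFunctionalCalculus ℝ A IsSelfAdjoint]
  [NonnegSpectrumClass ℝ A]

theorem star_mul_self_le_algebraMap_of_mul_star_self_le {a : A} {r : ℝ} (hr : 0 ≤ r)
    (h : a * star a ≤ algebraMap ℝ A r) : star a * a ≤ algebraMap ℝ A r := by
  rw [le_algebraMap_iff_spectrum_le] at h ⊢
  intro x hx
  by_cases hx0 : x = 0
  · exact hx0 ▸ hr
  · have hx' : x ∈ spectrum ℝ (star a * a) \ {0} := ⟨hx, hx0⟩
    rw [spectrum.nonzero_mul_comm] at hx'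
    exact h x hx'.1

end StarOrderedRing

namespace Matrix

local notation "E" a:max b:max => (single a b (1 : ℂ) ⊗ₖ (1 : Matrix _ _ ℂ))

section Kronecker

variable {m n : Type*} [Fintype m] [Fintype n]

theorem kronecker_le_kronecker_left {A : Matrix m m ℂ} (hA : 0 ≤ A) {M N : Matrix n n ℂ}
    (h : M ≤ N) : A ⊗ₖ M ≤ A ⊗ₖ N := by
  rw [le_iff] at h ⊢
  have hsub : A ⊗ₖ N - A ⊗ₖ M = A ⊗ₖ (N - M) := by
    ext
    simp [mul_sub]
  exact hsub ▸ (nonneg_iff_posSemidef.mp hA).kronecker h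

variable [DecidableEq m] [DecidableEq n]

omit [Fintype n] in
lemma sum_single_kronecker_one : ∑ b : m, E b b = (1 : Matrix (m × n) (m × n) ℂ) := by
  ext ⟨a, d⟩ ⟨a', d'⟩
  simp [sum_apply, single_apply, one_apply, ite_and]
  split_ifs <;> rfl

lemma single_kronecker_one_mul_mul_conjTranspose (ρ : Matrix (m × n) (m × n) ℂ) (a b : m) :
    E a b * ρ * (E a b)ᴴ = single a a 1 ⊗ₖ ρ.submatrix (Prod.mk b) (Prod.mk b) := by
  ext ⟨x, d⟩ ⟨x', d'⟩
  simp [mul_apply, single_apply, one_apply, Fintype.sum_prod_type, ite_and,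
    apply_ite (starRingEnd ℂ)]
  split_ifs <;> rfl

end Kronecker

section PseudoInverse

variable {N : Type*} [Fintype N] [DecidableEq N]

-- Since `(0 : ℝ)⁻¹ = 0`, the eigenvalues omitted by `pinvH` contribute nothing to `cfc (·⁻¹)`.
lemma pinvH_eq_cfc {σ : Matrix N N ℂ} (hσ : σ.IsHermitian) : pinvH σ = cfc (·⁻¹ : ℝ → ℝ) σ := by
  rw [pinvH, dif_pos hσ, hσ.cfc_eq, IsHermitian.cfc, Unitary.conjStarAlgAut_apply,
    Finset.sum_filter_of_ne (p := fun k => hσ.eigenvalues k ≠ 0) fun k _ hk h => hk (by simp [h])]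
  ext i j
  simp only [sum_apply, smul_apply, of_apply, mul_apply, diagonal_apply, Function.comp_apply,
    mul_ite, mul_zero, Finset.sum_ite_eq', Finset.mem_univ, if_true, star_apply,
    IsHermitian.eigenvectorUnitary_apply, Complex.real_smul]
  exact Finset.sum_congr rfl fun k _ => by ac_rfl

lemma PosSemidef.exists_mul_self_eq_pinvH {σ : Matrix N N ℂ} (hσ : σ.PosSemidef) :
    ∃ T : Matrix N N ℂ, IsSelfAdjoint T ∧ T * T = pinvH σ ∧ T * σ * T ≤ 1 := by
  have hcont (f : ℝ → ℝ) : ContinuousOn f (spectrum ℝ σ) := σ.finite_real_spectrum.continuousOn f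
  have hnonneg {x : ℝ} (hx : x ∈ spectrum ℝ σ) : 0 ≤ x := spectrum_nonneg_of_nonneg hσ.nonneg hx
  refine ⟨cfc (fun x => (√x)⁻¹) σ, cfc_predicate _ _, ?_, ?_⟩
  · rw [← cfc_mul _ _ σ (hcont _) (hcont _), pinvH_eq_cfc hσ.1]
    refine cfc_congr fun x hx => ?_
    simp [← mul_inv, Real.mul_self_sqrt (hnonneg hx)]
  · nth_rw 2 [← cfc_id' ℝ σ]
    rw [← cfc_mul _ _ σ (hcont _) (hcont _), ← cfc_mul _ _ σ (hcont _) (hcont _)]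
    refine cfc_le_one _ _ fun x hx => ?_
    rcases (hnonneg hx).eq_or_lt with rfl | hx0
    · simp
    · rw [mul_right_comm, ← mul_inv, Real.mul_self_sqrt hx0.le, inv_mul_cancel₀ hx0.ne']

end PseudoInverse

section Trace

variable {N : Type*} [Fintype N] [DecidableEq N]

theorem re_trace_mul_self_mul_le {ρ S : Matrix N N ℂ} (hρ : 0 ≤ ρ) (hS : IsSelfAdjoint S)
    {c : ℝ} (hc : 0 ≤ c) (h : S * ρ * S ≤ algebraMap ℝ _ c) :
    (ρ * ρ * (S * S)).trace.re ≤ c * ρ.trace.re := by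
  set R := CFC.sqrt ρ
  have hR : IsSelfAdjoint R := (CFC.sqrt_nonneg ρ).isSelfAdjoint
  have hRR : R * R = ρ := CFC.sqrt_mul_sqrt_self ρ hρ
  have hX : S * R * star (S * R) ≤ algebraMap ℝ _ c := by
    rwa [star_mul, hR.star_eq, hS.star_eq, mul_assoc, ← mul_assoc R, hRR, ← mul_assoc]
  have hXX := star_mul_self_le_algebraMap_of_mul_star_self_le hc hX
  have htrace : (ρ * ρ * (S * S)).trace = (R * (star (S * R) * (S * R)) * R).trace := by
    rw [← hRR, star_mul, hR.star_eq, hS.star_eq, mul_assoc, trace_mul_comm]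
    simp only [mul_assoc]
  have hmono := OrderHomClass.mono (tracePositiveLinearMap N ℝ ℂ) (hR.conjugate_le_conjugate hXX)
  calc (ρ * ρ * (S * S)).trace.re = (R * (star (S * R) * (S * R)) * R).trace.re := by rw [htrace]
    _ ≤ (R * algebraMap ℝ _ c * R).trace.re := (Complex.le_def.mp hmono).1
    _ = c * ρ.trace.re := by
      rw [Algebra.algebraMap_eq_smul_one, mul_smul_comm, smul_mul_assoc, mul_one, hRR,
        trace_smul, Complex.real_smul, Complex.re_ofReal_mul]

end Trace

section PartialTrace

variable {dA dD : ℕ}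

lemma ptrFst_eq_sum_submatrix (ρ : Matrix (Fin dA × Fin dD) (Fin dA × Fin dD) ℂ) :
    ptrFst ρ = ∑ a, ρ.submatrix (Prod.mk a) (Prod.mk a) := by
  ext
  simp [ptrFst, sum_apply]

lemma posSemidef_ptrFst {ρ : Matrix (Fin dA × Fin dD) (Fin dA × Fin dD) ℂ} (hρ : ρ.PosSemidef) :
    (ptrFst ρ).PosSemidef :=
  ptrFst_eq_sum_submatrix ρ ▸ posSemidef_sum _ fun _ _ => hρ.submatrix _

lemma one_kronecker_ptrFst (ρ : Matrix (Fin dA × Fin dD) (Fin dA × Fin dD) ℂ) :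
    1 ⊗ₖ ptrFst ρ = ∑ a, ∑ b, E a b * ρ * (E a b)ᴴ := by
  simp_rw [single_kronecker_one_mul_mul_conjTranspose, ptrFst_eq_sum_submatrix]
  ext ⟨x, d⟩ ⟨x', d'⟩
  simp [sum_apply, single_apply, one_apply, ite_and]

theorem PosSemidef.le_nsmul_one_kronecker_ptrFst
    {ρ : Matrix (Fin dA × Fin dD) (Fin dA × Fin dD) ℂ} (hρ : ρ.PosSemidef) :
    ρ ≤ dA • (1 ⊗ₖ ptrFst ρ) := by
  obtain ⟨X, rfl⟩ := CStarAlgebra.nonneg_iff_eq_star_mul_self.mp hρ.nonneg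
  calc star X * X = star (∑ b, X * (E b b)ᴴ) * ∑ b, X * (E b b)ᴴ := by
        rw [← Finset.mul_sum, ← conjTranspose_sum, sum_single_kronecker_one, conjTranspose_one,
          mul_one]
    _ ≤ dA • ∑ b, E b b * (star X * X) * (E b b)ᴴ := by
        refine (star_sum_mul_sum_le_card_nsmul Finset.univ _).trans_eq ?_
        rw [Finset.card_univ, Fintype.card_fin]
        refine congrArg _ (Finset.sum_congr rfl fun b _ => ?_)
        rw [star_mul, star_eq_conjTranspose (E b b)ᴴ, conjTranspose_conjTranspose]
        simp only [mul_assoc]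
    _ ≤ dA • ∑ a, ∑ b, E a b * (star X * X) * (E a b)ᴴ := by
        refine nsmul_le_nsmul_right ?_ dA
        rw [Finset.sum_comm]
        exact Finset.sum_le_sum fun b _ =>
          Finset.single_le_sum (f := fun a => E a b * (star X * X) * (E a b)ᴴ)
            (fun a _ => star_right_conjugate_nonneg hρ.nonneg _) (Finset.mem_univ b)
    _ = dA • (1 ⊗ₖ ptrFst (star X * X)) := by rw [one_kronecker_ptrFst]

end PartialTrace

end Matrix

theorem trace_sq_kron_pinv_le_general (dA dD : ℕ)
    (ρ : Matrix (Fin dA × Fin dD) (Fin dA × Fin dD) ℂ)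
    (hρ : ρ.PosSemidef) (hρtr : ρ.trace = 1) :
    (Matrix.trace
        (ρ * ρ * ((1 : Matrix (Fin dA) (Fin dA) ℂ) ⊗ₖ pinvH (ptrFst ρ)))).re ≤ (dA : ℝ) := by
  obtain ⟨T, hT, hTT, hTσT⟩ := (Matrix.posSemidef_ptrFst hρ).exists_mul_self_eq_pinvH
  set S : Matrix (Fin dA × Fin dD) (Fin dA × Fin dD) ℂ := 1 ⊗ₖ T
  have hS : IsSelfAdjoint S := by
    rw [IsSelfAdjoint, Matrix.star_eq_conjTranspose, Matrix.conjTranspose_kronecker,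
      Matrix.conjTranspose_one, ← Matrix.star_eq_conjTranspose, hT.star_eq]
  have hSρS : S * ρ * S ≤ algebraMap ℝ _ (dA : ℝ) := calc
    S * ρ * S ≤ S * (dA • (1 ⊗ₖ ptrFst ρ)) * S :=
      hS.conjugate_le_conjugate hρ.le_nsmul_one_kronecker_ptrFst
    _ = dA • (1 ⊗ₖ (T * ptrFst ρ * T)) := by
      rw [mul_smul_comm, smul_mul_assoc, ← Matrix.mul_kronecker_mul, ← Matrix.mul_kronecker_mul,
        one_mul, one_mul]
    _ ≤ dA • (1 ⊗ₖ 1) := nsmul_le_nsmul_right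
      (Matrix.kronecker_le_kronecker_left Matrix.PosSemidef.one.nonneg hTσT) dA
    _ = algebraMap ℝ _ (dA : ℝ) := by simp
  have h := Matrix.re_trace_mul_self_mul_le hρ.nonneg hS (Nat.cast_nonneg dA) hSρS
  rw [← hTT, ← one_mul (1 : Matrix (Fin dA) (Fin dA) ℂ), Matrix.mul_kronecker_mul]
  simpa [hρtr] using h

/-- For any density matrix `ρ` on `ℂ^{d_A} ⊗ ℂ^{d_D}` with partial trace `ρ_D` over the first
factor, `tr(ρ²·(I_{d_A} ⊗ ρ_D⁻¹)) ≤ d_A` where `ρ_D⁻¹` is the generalized (Moore–Penrose)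
inverse of `ρ_D`. -/
theorem trace_sq_kron_pinv_le (dA dD : ℕ) (hdA : 1 ≤ dA) (hdD : 1 ≤ dD)
    (ρ : Matrix (Fin dA × Fin dD) (Fin dA × Fin dD) ℂ)
    (hρ : ρ.PosSemidef) (hρtr : ρ.trace = 1) :
    (Matrix.trace
        (ρ * ρ * ((1 : Matrix (Fin dA) (Fin dA) ℂ) ⊗ₖ pinvH (ptrFst ρ)))).re ≤ (dA : ℝ) :=
  trace_sq_kron_pinv_le_general dA dD ρ hρ hρtr
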